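/- arXiv:2206.08594 — 7 statements merged into one kernel-verified Lean document; each statement's English description precedes it below -/
import Mathlib

section
/- The minimizers ω_m of the expected m-step solution error converge to the reciprocal of the smaller eigenvalue: lim_{m→∞} ω_m = 1/μ1. -/
open Filter Topology

/-- Minimizer of the expected `m`-step solution error in the two-task Jacobi setting. -/
noncomputable def omegaM (p c1 c2 μ1 μ2 l1 l2 m : ℝ) : ℝ :=
  (p * c1 ^ 2 * μ1 * l1 ^ (2 * m) + (1 - p) * c2 ^ 2 * μ2 * l2 ^ (2 * m)) /
  (p * c1 ^ 2 * μ1 ^ 2 * l1 ^ (2 * m) + (1 - p) * c2 ^ 2 * μ2 ^ 2 * l2 ^ (2 * m))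

/-- Dividing through by `a ^ t`, the `b ^ t` terms become `(b / a) ^ t → 0`. -/
theorem tendsto_div_rpow_combination_of_lt {a b : ℝ} (hb : 0 ≤ b) (hba : b < a)
    (A B C D : ℝ) (hC : C ≠ 0) :
    Tendsto (fun t : ℝ => (A * a ^ t + B * b ^ t) / (C * a ^ t + D * b ^ t))
      atTop (𝓝 (A / C)) := by
  have ha : 0 < a := hb.trans_lt hba
  have hratio : Tendsto (fun t : ℝ => (b / a) ^ t) atTop (𝓝 0) :=
    tendsto_rpow_atTop_of_base_lt_one _ (by linarith [div_nonneg hb ha.le])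
      ((div_lt_one ha).mpr hba)
  have hlim : Tendsto (fun t : ℝ => (A + B * (b / a) ^ t) / (C + D * (b / a) ^ t))
      atTop (𝓝 ((A + B * 0) / (C + D * 0))) :=
    (tendsto_const_nhds.add (tendsto_const_nhds.mul hratio)).div
      (tendsto_const_nhds.add (tendsto_const_nhds.mul hratio)) (by simpa using hC)
  simp only [mul_zero, add_zero] at hlim
  refine hlim.congr fun t => ?_
  have hat : a ^ t ≠ 0 := (Real.rpow_pos_of_pos ha t).ne'
  rw [Real.div_rpow hb ha.le, ← mul_div_mul_right _ _ hat]
  congr 1 <;> field_simp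

theorem omegaM_tendsto_general (μ1 μ2 l1 l2 c1 c2 p : ℝ)
    (hμ1 : 0 < μ1) (hμ12 : μ1 < μ2) (hμ2 : μ2 < 2)
    (hl1 : l1 = 1 - μ1 / 2) (hl2 : l2 = 1 - μ2 / 2)
    (hc1 : 0 < c1) (hp0 : 0 < p) :
    Filter.Tendsto (fun m : ℝ => omegaM p c1 c2 μ1 μ2 l1 l2 m)
      Filter.atTop (nhds (1 / μ1)) := by
  have hl2_nonneg : 0 ≤ l2 := by rw [hl2]; linarith
  have hl21 : l2 < l1 := by rw [hl1, hl2]; linarith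
  have hC : p * c1 ^ 2 * μ1 ^ 2 ≠ 0 := by positivity
  have hquot : p * c1 ^ 2 * μ1 / (p * c1 ^ 2 * μ1 ^ 2) = 1 / μ1 := by
    field_simp
  rw [← hquot]
  exact (tendsto_div_rpow_combination_of_lt hl2_nonneg hl21 _ _ _ _ hC).comp
    (tendsto_id.const_mul_atTop two_pos)

/-- The minimizers `ω_m` converge to `1/μ1` as `m → ∞`. -/
theorem omegaM_tendsto (μ1 μ2 l1 l2 c1 c2 p : ℝ)
    (hμ1 : 0 < μ1) (hμ12 : μ1 < μ2) (hμ2 : μ2 < 2)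
    (hl1 : l1 = 1 - μ1 / 2) (hl2 : l2 = 1 - μ2 / 2)
    (hc1 : 0 < c1) (hc2 : 0 < c2) (hp0 : 0 < p) (hp1 : p < 1) :
    Filter.Tendsto (fun m : ℝ => omegaM p c1 c2 μ1 μ2 l1 l2 m)
      Filter.atTop (nhds (1 / μ1)) :=
  omegaM_tendsto_general μ1 μ2 l1 l2 c1 c2 p hμ1 hμ12 hμ2 hl1 hl2 hc1 hp0
end

section
/- The map m ↦ ω_m is strictly increasing on [0, ∞): for all real 0 ≤ m1 < m2 one has ω_{m1} < ω_{m2}. -/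
open Set

lemma strictAntiOn_add_mul_div_add_mul {a b c d : ℝ} (hc : 0 < c) (hd : 0 ≤ d)
    (hbc : b * c < a * d) : StrictAntiOn (fun r => (a + r * b) / (c + r * d)) (Ici 0) := by
  intro r hr s hs hrs
  rw [mem_Ici] at hr hs
  rw [div_lt_div_iff₀ (by positivity) (by positivity)]
  nlinarith [mul_pos (sub_pos.2 hrs) (sub_pos.2 hbc)]

lemma omegaM_eq_div {p c1 c2 μ1 μ2 l1 l2 : ℝ} (hp : p ≠ 0) (hc1 : c1 ≠ 0) (hl1 : 0 < l1)
    (hl2 : 0 ≤ l2) (m : ℝ) :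
    omegaM p c1 c2 μ1 μ2 l1 l2 m =
      let r := (1 - p) * c2 ^ 2 / (p * c1 ^ 2) * (l2 / l1) ^ (2 * m)
      (μ1 + r * μ2) / (μ1 ^ 2 + r * μ2 ^ 2) := by
  have hA : p * c1 ^ 2 * l1 ^ (2 * m) ≠ 0 := by
    have := Real.rpow_pos_of_pos hl1 (2 * m)
    positivity
  rw [omegaM, Real.div_rpow hl2 hl1.le, ← mul_div_mul_left _ (μ1 ^ 2 + _) hA]
  congr 1 <;> field_simp

/-- The map `m ↦ ω_m` is strictly increasing on `[0, ∞)`. -/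
theorem omegaM_strictMono (μ1 μ2 l1 l2 c1 c2 p : ℝ)
    (hμ1 : 0 < μ1) (hμ12 : μ1 < μ2) (hμ2 : μ2 < 2)
    (hl1 : l1 = 1 - μ1 / 2) (hl2 : l2 = 1 - μ2 / 2)
    (hc1 : 0 < c1) (hc2 : 0 < c2) (hp0 : 0 < p) (hp1 : p < 1) :
    ∀ m1 m2 : ℝ, 0 ≤ m1 → m1 < m2 →
      omegaM p c1 c2 μ1 μ2 l1 l2 m1 < omegaM p c1 c2 μ1 μ2 l1 l2 m2 := by
  intro m1 m2 _ hm12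
  have hl1pos : 0 < l1 := by rw [hl1]; linarith
  have hl2pos : 0 < l2 := by rw [hl2]; linarith
  have hρ : l2 / l1 < 1 := (div_lt_one hl1pos).2 (by rw [hl1, hl2]; linarith)
  have hκ : 0 < (1 - p) * c2 ^ 2 / (p * c1 ^ 2) := by
    have := sub_pos.2 hp1
    positivity
  have hμ : μ2 * μ1 ^ 2 < μ1 * μ2 ^ 2 := by nlinarith [mul_pos hμ1 (hμ1.trans hμ12)]
  simp only [omegaM_eq_div hp0.ne' hc1.ne' hl1pos hl2pos.le]
  refine strictAntiOn_add_mul_div_add_mul (by positivity) (by positivity) hμ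
    (mem_Ici.2 (by positivity)) (mem_Ici.2 (by positivity)) ?_
  exact mul_lt_mul_of_pos_left
    (Real.rpow_lt_rpow_of_exponent_gt (by positivity) hρ (by linarith)) hκ
end

section
/- Assume 0 < ε < c1·c2·(μ2 − μ1)/(c1·μ1 + c2·μ2). Then E_ε is strictly decreasing on (−∞, ω_(ε,2)]: for all real ω < ω' ≤ ω_(ε,2), one has E_ε(ω) > E_ε(ω'). -/
/-- Relaxed iteration count of a single task with constant `c`, eigenvalue `μ`,
contraction factor `lam`, at initial-guess coefficient `ω`. -/
noncomputable def Leps (ε c μ lam ω : ℝ) : ℝ :=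
  if ω * μ = 1 then 0
  else max 0 (Real.log (ε / (c * |ω * μ - 1|)) / Real.log lam)

/-- Expected relaxed iteration count over the two tasks. -/
noncomputable def Eeps (p ε c1 c2 μ1 μ2 l1 l2 ω : ℝ) : ℝ :=
  p * Leps ε c1 μ1 l1 ω + (1 - p) * Leps ε c2 μ2 l2 ω

/-- `ω_(ε,1) = 1/μ1 − ε/(c1·μ1)`. -/
noncomputable def omegaE1 (ε c1 μ1 : ℝ) : ℝ := 1 / μ1 - ε / (c1 * μ1)

/-- `ω_(ε,2) = 1/μ2 + ε/(c2·μ2)`. -/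
noncomputable def omegaE2 (ε c2 μ2 : ℝ) : ℝ := 1 / μ2 + ε / (c2 * μ2)

/-- Threshold probability `p_ε`. -/
noncomputable def pEps (ε c1 c2 μ1 μ2 l1 l2 : ℝ) : ℝ :=
  Leps ε c2 μ2 l2 (omegaE1 ε c1 μ1) /
  (Leps ε c1 μ1 l1 (omegaE2 ε c2 μ2) + Leps ε c2 μ2 l2 (omegaE1 ε c1 μ1))

/-- Limiting threshold probability `p_0`. -/
noncomputable def pZero (l1 l2 : ℝ) : ℝ :=
  Real.log l1 / (Real.log l1 + Real.log l2)

/-!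
`L_ε(i, ω)` depends on `ω` only through the residual `|ω μ_i - 1|`, through a function of the
residual that vanishes on `[0, ε/c_i]` and increases strictly beyond it. Left of `ω_(ε,1)` the
first residual `1 - ω μ_1` stays `≥ ε/c_1` and strictly decreases, so `L_ε(1, ·)` strictly
decreases; left of `ω_(ε,2)` the second residual either decreases or is `≤ ε/c_2`, so `L_ε(2, ·)`
does not increase. The bound on `ε` is exactly `ω_(ε,2) < ω_(ε,1)`.
-/

open Set

/-- The iteration count as a function of the residual `r = |ω μ - 1|`. -/
noncomputable def iterCount (ε c lam r : ℝ) : ℝ :=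
  max 0 (Real.log (ε / (c * r)) / Real.log lam)

/-- The case `ω μ = 1` of `Leps` needs no special treatment, since `ε / 0 = 0` and `log 0 = 0`. -/
theorem Leps_eq_iterCount (ε c μ lam ω : ℝ) :
    Leps ε c μ lam ω = iterCount ε c lam |ω * μ - 1| := by
  unfold Leps iterCount
  split_ifs with h
  · simp [h]
  · rfl

section iterCount

variable {ε c lam r r' : ℝ}

theorem iterCount_eq_zero (hc : 0 < c) (hlam₀ : 0 < lam) (hlam₁ : lam < 1)
    (hr₀ : 0 ≤ r) (hr : r ≤ ε / c) : iterCount ε c lam r = 0 := by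
  rcases hr₀.eq_or_lt with rfl | hr₀
  · simp [iterCount]
  have hone : 1 ≤ ε / (c * r) := by
    rw [le_div_iff₀ (by positivity), one_mul, mul_comm]
    exact (le_div_iff₀ hc).mp hr
  exact max_eq_left <|
    div_nonpos_of_nonneg_of_nonpos (Real.log_nonneg hone) (Real.log_neg hlam₀ hlam₁).le

theorem iterCount_monotoneOn (hε : 0 < ε) (hc : 0 < c) (hlam₀ : 0 < lam) (hlam₁ : lam < 1) :
    MonotoneOn (iterCount ε c lam) (Ici 0) := by
  intro r hr r' _ hrr'
  rcases (mem_Ici.mp hr).eq_or_lt with rfl | hr₀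
  · simp only [iterCount, mul_zero, div_zero, Real.log_zero, zero_div, max_self]
    exact le_max_left _ _
  have hr'₀ : 0 < r' := hr₀.trans_le hrr'
  refine max_le_max le_rfl <| div_le_div_of_nonpos_of_le (Real.log_neg hlam₀ hlam₁).le ?_
  exact Real.log_le_log (by positivity) <|
    div_le_div_of_nonneg_left hε.le (by positivity) (by gcongr)

theorem iterCount_lt (hε : 0 < ε) (hc : 0 < c) (hlam₀ : 0 < lam) (hlam₁ : lam < 1)
    (hr : ε / c ≤ r) (hrr' : r < r') : iterCount ε c lam r < iterCount ε c lam r' := by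
  have hr₀ : 0 < r := (div_pos hε hc).trans_le hr
  have hr'₀ : 0 < r' := hr₀.trans hrr'
  have hloglam : Real.log lam < 0 := Real.log_neg hlam₀ hlam₁
  have hlog_lt : Real.log (ε / (c * r)) / Real.log lam < Real.log (ε / (c * r')) / Real.log lam :=
    div_lt_div_of_neg_of_lt hloglam <| Real.log_lt_log (by positivity) <|
      div_lt_div_of_pos_left hε (by positivity) (by gcongr)
  have hle_one : ε / (c * r) ≤ 1 := by
    rw [div_le_one (by positivity), mul_comm]
    exact (div_le_iff₀ hc).mp hr
  have hnonneg : Real.log (ε / (c * r)) / Real.log lam ≥ 0 :=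
    div_nonneg_of_nonpos (Real.log_nonpos (by positivity) hle_one) hloglam.le
  unfold iterCount
  rw [max_eq_right hnonneg, max_eq_right (hnonneg.trans hlog_lt.le)]
  exact hlog_lt

end iterCount

section Leps

variable {ε c μ lam : ℝ}

theorem omegaE1_mul (hc : 0 < c) (hμ : 0 < μ) : omegaE1 ε c μ * μ = 1 - ε / c := by
  unfold omegaE1
  field_simp

theorem omegaE2_mul (hc : 0 < c) (hμ : 0 < μ) : omegaE2 ε c μ * μ = 1 + ε / c := by
  unfold omegaE2
  field_simp

theorem Leps_strictAntiOn (hε : 0 < ε) (hc : 0 < c) (hμ : 0 < μ) (hlam₀ : 0 < lam)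
    (hlam₁ : lam < 1) : StrictAntiOn (Leps ε c μ lam) (Iic (omegaE1 ε c μ)) := by
  intro ω _ ω' hω' hωω'
  have hres : ε / c ≤ 1 - ω' * μ := by
    have := mul_le_mul_of_nonneg_right (mem_Iic.mp hω') hμ.le
    rw [omegaE1_mul hc hμ] at this
    linarith
  have hmul : ω * μ < ω' * μ := mul_lt_mul_of_pos_right hωω' hμ
  have hεc : 0 < ε / c := div_pos hε hc
  rw [Leps_eq_iterCount, Leps_eq_iterCount, abs_of_neg (by linarith), abs_of_neg (by linarith)]
  exact iterCount_lt hε hc hlam₀ hlam₁ (by linarith) (by linarith)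

theorem Leps_antitoneOn (hε : 0 < ε) (hc : 0 < c) (hμ : 0 < μ) (hlam₀ : 0 < lam)
    (hlam₁ : lam < 1) : AntitoneOn (Leps ε c μ lam) (Iic (omegaE2 ε c μ)) := by
  intro ω _ ω' hω' hωω'
  rw [Leps_eq_iterCount, Leps_eq_iterCount]
  rcases le_or_gt (ω' * μ) 1 with hle | hgt
  · have hmul : ω * μ ≤ ω' * μ := mul_le_mul_of_nonneg_right hωω' hμ.le
    refine iterCount_monotoneOn hε hc hlam₀ hlam₁ (mem_Ici.mpr (abs_nonneg _))
      (mem_Ici.mpr (abs_nonneg _)) ?_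
    rw [abs_of_nonpos (by linarith), abs_of_nonpos (by linarith)]
    linarith
  · have hres : ω' * μ - 1 ≤ ε / c := by
      have := mul_le_mul_of_nonneg_right (mem_Iic.mp hω') hμ.le
      rw [omegaE2_mul hc hμ] at this
      linarith
    rw [iterCount_eq_zero hc hlam₀ hlam₁ (abs_nonneg _) (by rwa [abs_of_pos (by linarith)])]
    exact le_max_left _ _

end Leps

theorem omegaE2_lt_omegaE1 {ε c1 c2 μ1 μ2 : ℝ} (hμ1 : 0 < μ1) (hμ12 : μ1 < μ2)
    (hc1 : 0 < c1) (hc2 : 0 < c2) (hεlt : ε < c1 * c2 * (μ2 - μ1) / (c1 * μ1 + c2 * μ2)) :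
    omegaE2 ε c2 μ2 < omegaE1 ε c1 μ1 := by
  have hμ2 : 0 < μ2 := hμ1.trans hμ12
  rw [lt_div_iff₀ (by positivity)] at hεlt
  unfold omegaE1 omegaE2
  rw [← sub_pos]
  have key : 1 / μ1 - ε / (c1 * μ1) - (1 / μ2 + ε / (c2 * μ2)) =
      (c1 * c2 * (μ2 - μ1) - ε * (c1 * μ1 + c2 * μ2)) / (c1 * c2 * μ1 * μ2) := by
    field_simp
    ring
  rw [key]
  exact div_pos (by linarith) (by positivity)

/-- For `0 < ε < c1·c2·(μ2−μ1)/(c1·μ1+c2·μ2)`, the expected iteration count `E_ε`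
is strictly decreasing on `(−∞, ω_(ε,2)]`. -/
theorem Eeps_strictAnti_left (μ1 μ2 l1 l2 c1 c2 p : ℝ)
    (hμ1 : 0 < μ1) (hμ12 : μ1 < μ2) (hμ2 : μ2 < 2)
    (hl1 : l1 = 1 - μ1 / 2) (hl2 : l2 = 1 - μ2 / 2)
    (hc1 : 0 < c1) (hc2 : 0 < c2) (hp0 : 0 < p) (hp1 : p < 1)
    (ε : ℝ) (hε : 0 < ε)
    (hεlt : ε < c1 * c2 * (μ2 - μ1) / (c1 * μ1 + c2 * μ2)) :
    ∀ ω ω' : ℝ, ω < ω' → ω' ≤ omegaE2 ε c2 μ2 →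
      Eeps p ε c1 c2 μ1 μ2 l1 l2 ω > Eeps p ε c1 c2 μ1 μ2 l1 l2 ω' := by
  intro ω ω' hωω' hω'
  have hμ2pos : 0 < μ2 := hμ1.trans hμ12
  have hω'₁ : ω' ≤ omegaE1 ε c1 μ1 := hω'.trans (omegaE2_lt_omegaE1 hμ1 hμ12 hc1 hc2 hεlt).le
  have hL1 : Leps ε c1 μ1 l1 ω' < Leps ε c1 μ1 l1 ω :=
    Leps_strictAntiOn hε hc1 hμ1 (by linarith) (by linarith) (hωω'.le.trans hω'₁) hω'₁ hωω'
  have hL2 : Leps ε c2 μ2 l2 ω' ≤ Leps ε c2 μ2 l2 ω :=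
    Leps_antitoneOn hε hc2 hμ2pos (by linarith) (by linarith) (hωω'.le.trans hω') hω' hωω'.le
  unfold Eeps
  have := mul_lt_mul_of_pos_left hL1 hp0
  have := mul_le_mul_of_nonneg_left hL2 (sub_nonneg.mpr hp1.le)
  linarith
end

section
/- The function G(ω) = p·log(ε/(c1·(1 − ω·μ1)))/log λ1 + (1−p)·log(ε/(c2·(ω·μ2 − 1)))/log λ2 is strictly concave on the open interval (1/μ2, 1/μ1), for every ε > 0. -/
/-!
Each summand is `(weight / log λᵢ) · (log (ε / cᵢ) - log (affine function of ω))`. Since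
`0 < λᵢ < 1`, the factor `weight / log λᵢ` is negative, and the logarithm of a nonconstant
affine function that stays positive on the interval is strictly concave there; so each summand
is strictly concave, and hence so is their sum.
-/

open Real Set

theorem StrictConcaveOn.comp_mul_add {𝕜 β : Type*} [Field 𝕜] [LinearOrder 𝕜]
    [IsStrictOrderedRing 𝕜] [AddCommMonoid β] [PartialOrder β] [SMul 𝕜 β] {s t : Set 𝕜}
    {f : 𝕜 → β} (hf : StrictConcaveOn 𝕜 t f) (hs : Convex 𝕜 s) {a b : 𝕜} (ha : a ≠ 0)
    (hst : MapsTo (fun x => a * x + b) s t) :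
    StrictConcaveOn 𝕜 s fun x => f (a * x + b) := by
  refine ⟨hs, fun x hx y hy hxy u v hu hv huv => ?_⟩
  have hne : a * x + b ≠ a * y + b := by simpa [ha] using hxy
  have hcomb : u • (a * x + b) + v • (a * y + b) = a * (u • x + v • y) + b := by
    simp only [smul_eq_mul]
    linear_combination b * huv
  simpa only [hcomb] using hf.2 (hst hx) (hst hy) hne hu hv huv

theorem StrictConvexOn.const_mul_of_neg {𝕜 E : Type*} [Field 𝕜] [LinearOrder 𝕜]
    [IsStrictOrderedRing 𝕜] [AddCommMonoid E] [SMul 𝕜 E] {s : Set E} {f : E → 𝕜} {c : 𝕜}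
    (hf : StrictConvexOn 𝕜 s f) (hc : c < 0) : StrictConcaveOn 𝕜 s fun x => c * f x := by
  refine ⟨hf.1, fun x hx y hy hxy a b ha hb hab => ?_⟩
  calc a • (c * f x) + b • (c * f y) = c * (a • f x + b • f y) := by
        simp only [smul_eq_mul]; ring
    _ < c * f (a • x + b • y) := mul_lt_mul_of_neg_left (hf.2 hx hy hxy ha hb hab) hc

theorem strictConvexOn_log_div_mul {E : Type*} [AddCommMonoid E] [SMul ℝ E] {s : Set E}
    {g : E → ℝ} (hg : StrictConcaveOn ℝ s fun x => log (g x)) (hg₀ : ∀ x ∈ s, g x ≠ 0)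
    {ε c : ℝ} (hε : ε ≠ 0) (hc : c ≠ 0) :
    StrictConvexOn ℝ s fun x => log (ε / (c * g x)) := by
  refine ((neg_strictConvexOn_iff.2 hg).add_const (log ε - log c)).congr fun x hx => ?_
  simp only [Pi.add_apply, Pi.neg_apply, log_div hε (mul_ne_zero hc (hg₀ x hx)),
    log_mul hc (hg₀ x hx)]
  ring

/-- On the interval `(1/μ2, 1/μ1)`, the expected relaxed iteration count
`G(ω) = p·log(ε/(c1·(1−ω·μ1)))/log λ1 + (1−p)·log(ε/(c2·(ω·μ2−1)))/log λ2`
is strictly concave. -/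
theorem Eeps_strictConcaveOn (μ1 μ2 l1 l2 c1 c2 p : ℝ)
    (hμ1 : 0 < μ1) (hμ12 : μ1 < μ2) (hμ2 : μ2 < 2)
    (hl1 : l1 = 1 - μ1 / 2) (hl2 : l2 = 1 - μ2 / 2)
    (hc1 : 0 < c1) (hc2 : 0 < c2) (hp0 : 0 < p) (hp1 : p < 1)
    (ε : ℝ) (hε : 0 < ε) :
    StrictConcaveOn ℝ (Set.Ioo (1 / μ2) (1 / μ1))
      (fun ω : ℝ =>
        p * (Real.log (ε / (c1 * (1 - ω * μ1))) / Real.log l1) +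
        (1 - p) * (Real.log (ε / (c2 * (ω * μ2 - 1))) / Real.log l2)) := by
  have hμ2₀ : 0 < μ2 := hμ1.trans hμ12
  have hlog1 : log l1 < 0 := log_neg (by linarith) (by linarith)
  have hlog2 : log l2 < 0 := log_neg (by linarith) (by linarith)
  have hpos1 : ∀ ω ∈ Ioo (1 / μ2) (1 / μ1), 0 < -μ1 * ω + 1 := fun ω hω => by
    linarith [(lt_div_iff₀ hμ1).1 hω.2]
  have hpos2 : ∀ ω ∈ Ioo (1 / μ2) (1 / μ1), 0 < μ2 * ω + -1 := fun ω hω => by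
    linarith [(div_lt_iff₀ hμ2₀).1 hω.1]
  have hG1 := ((strictConvexOn_log_div_mul
    (strictConcaveOn_log_Ioi.comp_mul_add (convex_Ioo _ _) (neg_ne_zero.2 hμ1.ne') hpos1)
    (fun ω hω => (hpos1 ω hω).ne') hε.ne' hc1.ne').const_mul_of_neg
    (div_neg_of_pos_of_neg hp0 hlog1))
  have hG2 := ((strictConvexOn_log_div_mul
    (strictConcaveOn_log_Ioi.comp_mul_add (convex_Ioo _ _) hμ2₀.ne' hpos2)
    (fun ω hω => (hpos2 ω hω).ne') hε.ne' hc2.ne').const_mul_of_neg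
    (div_neg_of_pos_of_neg (sub_pos.2 hp1) hlog2))
  refine (hG1.add hG2).congr fun ω _ => ?_
  simp only [Pi.add_apply]
  ring_nf
end

section
/- The threshold probabilities converge to p_0 as the tolerance vanishes: lim_{ε→0⁺} p_ε = p_0 = log λ1 / (log λ1 + log λ2). -/
/-!
As `ε → 0⁺` the points `ω_(ε,1)`, `ω_(ε,2)` tend to `1/μ1`, `1/μ2`, where the residual factors
`c_i·|ω·μ_i − 1|` stay away from `0`. Hence `L_ε(i, ·) = (log ε − O(1)) / log λ_i`, so both
iteration counts grow like `log ε / log λ_i`, and after dividing numerator and denominator of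
`p_ε` by `log ε` its limit is `(1/log λ2) / (1/log λ1 + 1/log λ2) = p_0`.
-/

open Filter Topology

lemma eventually_log_neg_nhdsGT_zero : ∀ᶠ ε in 𝓝[>] (0 : ℝ), Real.log ε < 0 :=
  Real.tendsto_log_nhdsGT_zero.eventually (eventually_lt_atBot 0)

lemma tendsto_log_div_div_log {A : ℝ → ℝ} {a : ℝ} (hA : Tendsto A (𝓝[>] 0) (𝓝 a)) (ha : a ≠ 0) :
    Tendsto (fun ε => Real.log (ε / A ε) / Real.log ε) (𝓝[>] 0) (𝓝 1) := by
  have hsplit : ∀ᶠ ε in 𝓝[>] (0 : ℝ),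
      1 - Real.log (A ε) / Real.log ε = Real.log (ε / A ε) / Real.log ε := by
    filter_upwards [self_mem_nhdsWithin, hA.eventually_ne ha, eventually_log_neg_nhdsGT_zero]
      with ε hε hAε hlogε
    rw [Real.log_div (ne_of_gt hε) hAε, sub_div, div_self hlogε.ne]
  simpa using ((hA.log ha).div_atBot Real.tendsto_log_nhdsGT_zero).const_sub 1 |>.congr' hsplit

lemma tendsto_Leps_div_log {c μ lam ω₀ : ℝ} {ω : ℝ → ℝ} (hc : c ≠ 0) (hlam : Real.log lam ≤ 0)
    (hω : Tendsto ω (𝓝[>] 0) (𝓝 ω₀)) (hω₀ : ω₀ * μ ≠ 1) :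
    Tendsto (fun ε => Leps ε c μ lam (ω ε) / Real.log ε) (𝓝[>] 0) (𝓝 (1 / Real.log lam)) := by
  have hres : Tendsto (fun ε => ω ε * μ) (𝓝[>] 0) (𝓝 (ω₀ * μ)) := hω.mul_const μ
  have hratio := tendsto_log_div_div_log ((hres.sub_const 1).abs.const_mul c)
    (mul_ne_zero hc (abs_ne_zero.mpr (sub_ne_zero.mpr hω₀)))
  have hLeps : ∀ᶠ ε in 𝓝[>] (0 : ℝ), Real.log (ε / (c * |ω ε * μ - 1|)) / Real.log ε / Real.log lam
      = Leps ε c μ lam (ω ε) / Real.log ε := by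
    filter_upwards [hres.eventually_ne hω₀, hratio.eventually (eventually_gt_nhds one_pos),
      eventually_log_neg_nhdsGT_zero] with ε hωε hpos hlogε
    have hnonpos : Real.log (ε / (c * |ω ε * μ - 1|)) ≤ 0 :=
      ((div_pos_iff.mp hpos).resolve_left fun h => lt_asymm h.2 hlogε).1.le
    rw [Leps, if_neg hωε, max_eq_right (div_nonneg_of_nonpos hnonpos hlam), div_right_comm]
  exact (hratio.div_const (Real.log lam)).congr' hLeps

lemma tendsto_div_add_of_tendsto_div {α : Type*} {l : Filter α} {f g h : α → ℝ} {x y : ℝ}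
    (hf : Tendsto (fun t => f t / h t) l (𝓝 x)) (hg : Tendsto (fun t => g t / h t) l (𝓝 y))
    (hh : ∀ᶠ t in l, h t ≠ 0) (hxy : x + y ≠ 0) :
    Tendsto (fun t => g t / (f t + g t)) l (𝓝 (y / (x + y))) := by
  refine (hg.div (hf.add hg) hxy).congr' ?_
  filter_upwards [hh] with t ht
  change g t / h t / (f t / h t + g t / h t) = _
  rw [← add_div, div_div_div_cancel_right₀ ht]

lemma tendsto_omegaE1 (c μ : ℝ) : Tendsto (fun ε => omegaE1 ε c μ) (𝓝[>] 0) (𝓝 (1 / μ)) := by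
  have hcont : Continuous (fun ε => omegaE1 ε c μ) := by unfold omegaE1; fun_prop
  exact (hcont.tendsto' 0 _ (by simp [omegaE1])).mono_left nhdsWithin_le_nhds

lemma tendsto_omegaE2 (c μ : ℝ) : Tendsto (fun ε => omegaE2 ε c μ) (𝓝[>] 0) (𝓝 (1 / μ)) := by
  have hcont : Continuous (fun ε => omegaE2 ε c μ) := by unfold omegaE2; fun_prop
  exact (hcont.tendsto' 0 _ (by simp [omegaE2])).mono_left nhdsWithin_le_nhds

theorem pEps_tendsto_pZero_general (μ1 μ2 l1 l2 c1 c2 : ℝ)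
    (hμ1 : 0 < μ1) (hμ12 : μ1 < μ2) (hμ2 : μ2 < 2)
    (hl1 : l1 = 1 - μ1 / 2) (hl2 : l2 = 1 - μ2 / 2)
    (hc1 : 0 < c1) (hc2 : 0 < c2) :
    Filter.Tendsto (fun ε : ℝ => pEps ε c1 c2 μ1 μ2 l1 l2)
      (nhdsWithin 0 (Set.Ioi 0))
      (nhds (Real.log l1 / (Real.log l1 + Real.log l2))) ∧
    pZero l1 l2 = Real.log l1 / (Real.log l1 + Real.log l2) := by
  refine ⟨?_, rfl⟩
  have hμ2pos : 0 < μ2 := hμ1.trans hμ12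
  have hlog1 : Real.log l1 < 0 := Real.log_neg (by linarith) (by linarith)
  have hlog2 : Real.log l2 < 0 := Real.log_neg (by linarith) (by linarith)
  have hL1 := tendsto_Leps_div_log (lam := l1) hc1.ne' hlog1.le (tendsto_omegaE2 c2 μ2)
    (by rw [one_div_mul_eq_div, Ne, div_eq_one_iff_eq hμ2pos.ne']; exact hμ12.ne)
  have hL2 := tendsto_Leps_div_log (lam := l2) hc2.ne' hlog2.le (tendsto_omegaE1 c1 μ1)
    (by rw [one_div_mul_eq_div, Ne, div_eq_one_iff_eq hμ1.ne']; exact hμ12.ne')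
  have hsum : 1 / Real.log l1 + 1 / Real.log l2 ≠ 0 := by
    have := one_div_neg.mpr hlog1; have := one_div_neg.mpr hlog2; linarith
  have hlim := tendsto_div_add_of_tendsto_div hL1 hL2
    (eventually_log_neg_nhdsGT_zero.mono fun _ h => h.ne) hsum
  have hpZero : 1 / Real.log l2 / (1 / Real.log l1 + 1 / Real.log l2)
      = Real.log l1 / (Real.log l1 + Real.log l2) := by
    rw [div_add_div _ _ hlog1.ne hlog2.ne, one_mul, mul_one, div_div_eq_mul_div,
      one_div_mul_eq_div, mul_div_cancel_right₀ _ hlog2.ne, add_comm]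
  exact hpZero ▸ hlim

/-- The threshold probabilities converge to `p_0 = log λ1 / (log λ1 + log λ2)`
as the tolerance vanishes. -/
theorem pEps_tendsto_pZero (μ1 μ2 l1 l2 c1 c2 p : ℝ)
    (hμ1 : 0 < μ1) (hμ12 : μ1 < μ2) (hμ2 : μ2 < 2)
    (hl1 : l1 = 1 - μ1 / 2) (hl2 : l2 = 1 - μ2 / 2)
    (hc1 : 0 < c1) (hc2 : 0 < c2) (hp0 : 0 < p) (hp1 : p < 1) :
    Filter.Tendsto (fun ε : ℝ => pEps ε c1 c2 μ1 μ2 l1 l2)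
      (nhdsWithin 0 (Set.Ioi 0))
      (nhds (Real.log l1 / (Real.log l1 + Real.log l2))) ∧
    pZero l1 l2 = Real.log l1 / (Real.log l1 + Real.log l2) :=
  pEps_tendsto_pZero_general μ1 μ2 l1 l2 c1 c2 hμ1 hμ12 hμ2 hl1 hl2 hc1 hc2
end

section
/- Assume 0 < ε < c1·c2·(μ2 − μ1)/(c1·μ1 + c2·μ2). Then there exists m0 ≥ 0 such that for all real m1, m2 with m0 < m1 < m2, one has E_ε(ω_{m1}) ≤ E_ε(ω_{m2}); that is, training the solution-error loss with more Jacobi iterations eventually cannot decrease the expected iteration count at tolerance ε. -/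
/-!
Dividing numerator and denominator by `l1^(2m)` makes `ω_m` a fixed function of
`q = (l2/l1)^(2m)`, which decreases to `0` because `l2 < l1`. Then `1 − ω_m μ1 = O(q)`, so for
large `m` the first task needs no iterations at all, while `ω_m μ2 − 1` is positive and grows as
`q` shrinks, so the iteration count of the second task, and with it the expectation, can only grow.
-/
open Filter Topology

section Leps

variable {ε c μ lam ω ω' : ℝ}

theorem Leps_eq_zero_of_mul_abs_le (hc : 0 < c) (hlam0 : 0 ≤ lam) (hlam1 : lam ≤ 1)
    (h : c * |ω * μ - 1| ≤ ε) : Leps ε c μ lam ω = 0 := by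
  unfold Leps
  split_ifs with hω
  · rfl
  have hpos : 0 < c * |ω * μ - 1| := mul_pos hc (abs_pos.2 (sub_ne_zero.2 hω))
  exact max_eq_left (div_nonpos_of_nonneg_of_nonpos
    (Real.log_nonneg ((one_le_div hpos).2 h)) (Real.log_nonpos hlam0 hlam1))

theorem Leps_le_Leps_of_abs_le (hc : 0 < c) (hε : 0 < ε) (hlam0 : 0 ≤ lam) (hlam1 : lam ≤ 1)
    (hω : ω * μ ≠ 1) (h : |ω * μ - 1| ≤ |ω' * μ - 1|) :
    Leps ε c μ lam ω ≤ Leps ε c μ lam ω' := by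
  have hpos : 0 < |ω * μ - 1| := abs_pos.2 (sub_ne_zero.2 hω)
  have hω' : ω' * μ ≠ 1 := fun h' => by
    rw [h', sub_self, abs_zero] at h
    exact hpos.not_ge h
  unfold Leps
  rw [if_neg hω, if_neg hω']
  refine max_le_max le_rfl (div_le_div_of_nonpos_of_le (Real.log_nonpos hlam0 hlam1) ?_)
  exact Real.log_le_log (by positivity)
    (div_le_div_of_nonneg_left hε.le (by positivity) (by gcongr))

end Leps

/-- `omegaM` with numerator and denominator divided by `l1^(2m)`, where `q = (l2/l1)^(2m)`. -/
noncomputable def omegaOfRatio (a b μ1 μ2 q : ℝ) : ℝ :=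
  (a * μ1 + b * μ2 * q) / (a * μ1 ^ 2 + b * μ2 ^ 2 * q)

theorem omegaM_eq_omegaOfRatio {p c1 c2 μ1 μ2 l1 l2 : ℝ} (m : ℝ) (hl1 : 0 < l1) (hl2 : 0 ≤ l2) :
    omegaM p c1 c2 μ1 μ2 l1 l2 m =
      omegaOfRatio (p * c1 ^ 2) ((1 - p) * c2 ^ 2) μ1 μ2 ((l2 / l1) ^ (2 * m)) := by
  have : l1 ^ (2 * m) ≠ 0 := (Real.rpow_pos_of_pos hl1 _).ne'
  rw [omegaM, omegaOfRatio, Real.div_rpow hl2 hl1.le]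
  field_simp

section omegaOfRatio

variable {ε c lam a b μ1 μ2 q : ℝ}

theorem one_sub_omegaOfRatio_mul (hD : a * μ1 ^ 2 + b * μ2 ^ 2 * q ≠ 0) :
    1 - omegaOfRatio a b μ1 μ2 q * μ1 =
      b * μ2 * (μ2 - μ1) * q / (a * μ1 ^ 2 + b * μ2 ^ 2 * q) := by
  rw [omegaOfRatio, eq_div_iff hD]
  field_simp
  ring

theorem omegaOfRatio_mul_sub_one (hD : a * μ1 ^ 2 + b * μ2 ^ 2 * q ≠ 0) :
    omegaOfRatio a b μ1 μ2 q * μ2 - 1 = a * μ1 * (μ2 - μ1) / (a * μ1 ^ 2 + b * μ2 ^ 2 * q) := by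
  rw [omegaOfRatio, eq_div_iff hD]
  field_simp
  ring

theorem Leps_omegaOfRatio_eq_zero (hc : 0 < c) (hlam0 : 0 ≤ lam) (hlam1 : lam ≤ 1)
    (ha : 0 < a) (hb : 0 ≤ b) (hμ1 : 0 < μ1) (hμ12 : μ1 ≤ μ2) (hq : 0 ≤ q)
    (h : c * (b * μ2 * (μ2 - μ1) / (a * μ1 ^ 2) * q) ≤ ε) :
    Leps ε c μ1 lam (omegaOfRatio a b μ1 μ2 q) = 0 := by
  have hμ2 : 0 ≤ μ2 := hμ1.le.trans hμ12
  have hμ21 : 0 ≤ μ2 - μ1 := sub_nonneg.2 hμ12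
  have hD : 0 < a * μ1 ^ 2 + b * μ2 ^ 2 * q := by positivity
  refine Leps_eq_zero_of_mul_abs_le hc hlam0 hlam1 (le_trans ?_ h)
  gcongr
  rw [abs_sub_comm, one_sub_omegaOfRatio_mul hD.ne', abs_of_nonneg (by positivity),
    div_mul_eq_mul_div]
  exact div_le_div_of_nonneg_left (by positivity) (by positivity)
    (le_add_of_nonneg_right (by positivity))

theorem Leps_omegaOfRatio_antitoneOn (hc : 0 < c) (hε : 0 < ε) (hlam0 : 0 ≤ lam)
    (hlam1 : lam ≤ 1) (ha : 0 < a) (hb : 0 ≤ b) (hμ1 : 0 < μ1) (hμ12 : μ1 < μ2) :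
    AntitoneOn (fun q => Leps ε c μ2 lam (omegaOfRatio a b μ1 μ2 q)) (Set.Ici 0) := by
  intro q (hq : 0 ≤ q) q' (hq' : 0 ≤ q') hqq'
  have hμ21 : 0 < μ2 - μ1 := sub_pos.2 hμ12
  have hD : 0 < a * μ1 ^ 2 + b * μ2 ^ 2 * q := by positivity
  have hD' : 0 < a * μ1 ^ 2 + b * μ2 ^ 2 * q' := by positivity
  have hgap' := omegaOfRatio_mul_sub_one hD'.ne'
  have hpos : 0 < omegaOfRatio a b μ1 μ2 q' * μ2 - 1 := by rw [hgap']; positivity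
  refine Leps_le_Leps_of_abs_le hc hε hlam0 hlam1 (by linarith) ?_
  rw [abs_of_pos hpos, hgap', omegaOfRatio_mul_sub_one hD.ne', abs_of_pos (by positivity)]
  exact div_le_div_of_nonneg_left (by positivity) hD (by gcongr)

end omegaOfRatio

theorem Eeps_omegaM_eventually_monotone_general (μ1 μ2 l1 l2 c1 c2 p : ℝ)
    (hμ1 : 0 < μ1) (hμ12 : μ1 < μ2) (hμ2 : μ2 < 2)
    (hl1 : l1 = 1 - μ1 / 2) (hl2 : l2 = 1 - μ2 / 2)
    (hc1 : 0 < c1) (hc2 : 0 < c2) (hp0 : 0 < p) (hp1 : p < 1)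
    (ε : ℝ) (hε : 0 < ε) :
    ∃ m0 : ℝ, 0 ≤ m0 ∧ ∀ m1 m2 : ℝ, m0 < m1 → m1 < m2 →
      Eeps p ε c1 c2 μ1 μ2 l1 l2 (omegaM p c1 c2 μ1 μ2 l1 l2 m1) ≤
      Eeps p ε c1 c2 μ1 μ2 l1 l2 (omegaM p c1 c2 μ1 μ2 l1 l2 m2) := by
  have hl1pos : 0 < l1 := by linarith
  have hl2pos : 0 < l2 := by linarith
  have hr0 : 0 < l2 / l1 := div_pos hl2pos hl1pos
  have hr1 : l2 / l1 < 1 := (div_lt_one hl1pos).2 (by linarith)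
  have ha : 0 < p * c1 ^ 2 := by positivity
  have hb : 0 ≤ (1 - p) * c2 ^ 2 := mul_nonneg (by linarith) (sq_nonneg c2)
  have hω (m : ℝ) : omegaM p c1 c2 μ1 μ2 l1 l2 m = _ :=
    omegaM_eq_omegaOfRatio m hl1pos hl2pos.le
  set K := (1 - p) * c2 ^ 2 * μ2 * (μ2 - μ1) / (p * c1 ^ 2 * μ1 ^ 2)
  have hq : Tendsto (fun m : ℝ => c1 * (K * (l2 / l1) ^ (2 * m))) atTop (𝓝 0) := by
    simpa using (((tendsto_rpow_atTop_of_base_lt_one _ (by linarith) hr1).comp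
      (tendsto_id.const_mul_atTop two_pos)).const_mul K).const_mul c1
  obtain ⟨m0, hm0⟩ := eventually_atTop.1 (hq.eventually_lt_const hε)
  have hL1 (m : ℝ) (hm : max m0 0 < m) : Leps ε c1 μ1 l1 (omegaM p c1 c2 μ1 μ2 l1 l2 m) = 0 := by
    rw [hω]
    exact Leps_omegaOfRatio_eq_zero hc1 hl1pos.le (by linarith) ha hb hμ1 hμ12.le
      (by positivity) (hm0 m (max_lt_iff.1 hm).1.le).le
  refine ⟨max m0 0, le_max_right _ _, fun m1 m2 hm1 hm12 => ?_⟩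
  rw [Eeps, Eeps, hL1 m1 hm1, hL1 m2 (hm1.trans hm12), hω, hω, mul_zero, zero_add, zero_add]
  refine mul_le_mul_of_nonneg_left ?_ (by linarith)
  exact Leps_omegaOfRatio_antitoneOn hc2 hε hl2pos.le (by linarith) ha hb hμ1 hμ12
    (Set.mem_Ici.2 (by positivity)) (Set.mem_Ici.2 (by positivity))
    (Real.rpow_le_rpow_of_exponent_ge hr0 hr1.le (by linarith))

/-- Eventually, training the solution-error loss with more Jacobi iterations
cannot decrease the expected iteration count at tolerance `ε`. -/
theorem Eeps_omegaM_eventually_monotone (μ1 μ2 l1 l2 c1 c2 p : ℝ)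
    (hμ1 : 0 < μ1) (hμ12 : μ1 < μ2) (hμ2 : μ2 < 2)
    (hl1 : l1 = 1 - μ1 / 2) (hl2 : l2 = 1 - μ2 / 2)
    (hc1 : 0 < c1) (hc2 : 0 < c2) (hp0 : 0 < p) (hp1 : p < 1)
    (ε : ℝ) (hε : 0 < ε)
    (hεlt : ε < c1 * c2 * (μ2 - μ1) / (c1 * μ1 + c2 * μ2)) :
    ∃ m0 : ℝ, 0 ≤ m0 ∧ ∀ m1 m2 : ℝ, m0 < m1 → m1 < m2 →
      Eeps p ε c1 c2 μ1 μ2 l1 l2 (omegaM p c1 c2 μ1 μ2 l1 l2 m1) ≤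
      Eeps p ε c1 c2 μ1 μ2 l1 l2 (omegaM p c1 c2 μ1 μ2 l1 l2 m2) :=
  Eeps_omegaM_eventually_monotone_general μ1 μ2 l1 l2 c1 c2 p hμ1 hμ12 hμ2 hl1 hl2 hc1 hc2 hp0 hp1 ε
    hε
end

section
/- For every ε > 0 and every M > 0, there exist constants c1 > 0, c2 > 0 and a probability p ∈ (0, 1) such that for every real m ≥ 0 one has E_ε(ω_m) > M; that is, the expected iteration count achieved by the minimizers of the solution-error loss can be made arbitrarily large uniformly over all numbers of training iterations m. -/
lemma Leps_nonneg (ε c μ lam ω : ℝ) : 0 ≤ Leps ε c μ lam ω := by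
  unfold Leps
  split_ifs
  exacts [le_rfl, le_max_left _ _]

/-- The constant is chosen so that `ε / (c δ) = λ^K`. -/
lemma le_Leps_of_le_abs {ε μ lam ω δ : ℝ} (K : ℝ) (hε : 0 < ε) (hδ : 0 < δ)
    (hlam0 : 0 < lam) (hlam1 : lam < 1) (hgap : δ ≤ |ω * μ - 1|) :
    K ≤ Leps ε (ε / (δ * lam ^ K)) μ lam ω := by
  set c := ε / (δ * lam ^ K)
  have hpow : 0 < lam ^ K := Real.rpow_pos_of_pos hlam0 K
  have hc : 0 < c := by positivity
  have hne : ω * μ ≠ 1 := by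
    rintro h
    rw [h, sub_self, abs_zero] at hgap
    linarith
  have hcδ : ε / (c * δ) = lam ^ K := by
    simp only [c]
    field_simp
  have hlog : Real.log (ε / (c * |ω * μ - 1|)) ≤ K * Real.log lam := by
    rw [← Real.log_rpow hlam0, ← hcδ]
    apply Real.log_le_log (by positivity)
    exact div_le_div_of_nonneg_left hε.le (by positivity) (by gcongr)
  rw [Leps, if_neg hne]
  exact le_max_of_le_right ((le_div_iff_of_neg (Real.log_neg hlam0 hlam1)).mpr hlog)

lemma omegaM_eq_weighted (p c1 c2 μ1 μ2 l1 l2 m : ℝ) :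
    omegaM p c1 c2 μ1 μ2 l1 l2 m =
      let u := p * c1 ^ 2 * l1 ^ (2 * m)
      let v := (1 - p) * c2 ^ 2 * l2 ^ (2 * m)
      (μ1 * u + μ2 * v) / (μ1 ^ 2 * u + μ2 ^ 2 * v) := by
  unfold omegaM
  congr 1 <;> ring

lemma le_weighted_mul_sub_one {μ1 μ2 u v : ℝ} (hμ1 : 0 < μ1) (hμ12 : μ1 ≤ μ2) (hu : 0 < u)
    (hv : 0 ≤ v) (hvu : v ≤ u) :
    μ1 * (μ2 - μ1) / (μ1 ^ 2 + μ2 ^ 2) ≤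
      (μ1 * u + μ2 * v) / (μ1 ^ 2 * u + μ2 ^ 2 * v) * μ2 - 1 := by
  have hD : 0 < μ1 ^ 2 * u + μ2 ^ 2 * v := by positivity
  have hgap : (μ1 * u + μ2 * v) / (μ1 ^ 2 * u + μ2 ^ 2 * v) * μ2 - 1 =
      μ1 * (μ2 - μ1) * u / (μ1 ^ 2 * u + μ2 ^ 2 * v) := by
    field_simp
    ring
  rw [hgap, div_le_div_iff₀ (by positivity) hD]
  have := mul_nonneg (mul_nonneg (mul_nonneg hμ1.le (sub_nonneg.mpr hμ12)) (sq_nonneg μ2))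
    (sub_nonneg.mpr hvu)
  nlinarith

theorem Eeps_omegaM_unbounded_general (μ1 μ2 l1 l2 : ℝ)
    (hμ1 : 0 < μ1) (hμ12 : μ1 < μ2) (hμ2 : μ2 < 2)
    (hl1 : l1 = 1 - μ1 / 2) (hl2 : l2 = 1 - μ2 / 2)
    (ε M : ℝ) (hε : 0 < ε) :
    ∃ c1 c2 p : ℝ, 0 < c1 ∧ 0 < c2 ∧ 0 < p ∧ p < 1 ∧
      ∀ m : ℝ, 0 ≤ m →
        Eeps p ε c1 c2 μ1 μ2 l1 l2 (omegaM p c1 c2 μ1 μ2 l1 l2 m) > M := by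
  have hl2_pos : 0 < l2 := by linarith
  have hl21 : l2 ≤ l1 := by linarith
  set δ := μ1 * (μ2 - μ1) / (μ1 ^ 2 + μ2 ^ 2)
  have hδ : 0 < δ := div_pos (mul_pos hμ1 (by linarith)) (by positivity)
  set c := ε / (δ * l2 ^ (2 * M + 1))
  refine ⟨c, c, 1 / 2, by positivity, by positivity, by norm_num, by norm_num, fun m hm => ?_⟩
  have hpow : l2 ^ (2 * m) ≤ l1 ^ (2 * m) := Real.rpow_le_rpow hl2_pos.le hl21 (by positivity)
  have hgap : δ ≤ |omegaM (1 / 2) c c μ1 μ2 l1 l2 m * μ2 - 1| := by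
    rw [omegaM_eq_weighted]
    refine (le_weighted_mul_sub_one hμ1 hμ12.le ?_ ?_ ?_).trans (le_abs_self _)
    · have := Real.rpow_pos_of_pos (hl2_pos.trans_le hl21) (2 * m)
      positivity
    · have := Real.rpow_pos_of_pos hl2_pos (2 * m)
      positivity
    · norm_num
      gcongr
  have hL2 := le_Leps_of_le_abs (2 * M + 1) hε hδ hl2_pos (by linarith) hgap
  have hL1 := Leps_nonneg ε c μ1 l1 (omegaM (1 / 2) c c μ1 μ2 l1 l2 m)
  rw [Eeps]
  linarith

/-- The expected iteration count achieved by the minimizers of the solution-error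
loss can be made arbitrarily large, uniformly over all training iteration numbers. -/
theorem Eeps_omegaM_unbounded (μ1 μ2 l1 l2 : ℝ)
    (hμ1 : 0 < μ1) (hμ12 : μ1 < μ2) (hμ2 : μ2 < 2)
    (hl1 : l1 = 1 - μ1 / 2) (hl2 : l2 = 1 - μ2 / 2)
    (ε M : ℝ) (hε : 0 < ε) (hM : 0 < M) :
    ∃ c1 c2 p : ℝ, 0 < c1 ∧ 0 < c2 ∧ 0 < p ∧ p < 1 ∧
      ∀ m : ℝ, 0 ≤ m →
        Eeps p ε c1 c2 μ1 μ2 l1 l2 (omegaM p c1 c2 μ1 μ2 l1 l2 m) > M :=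
  Eeps_omegaM_unbounded_general μ1 μ2 l1 l2 hμ1 hμ12 hμ2 hl1 hl2 ε M hε
end
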